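/- Fix ℓ > 0. The map Φ_ℓ(t,v,s) = (v, exp(π(−e^{2t} − |v|² + 2is)/ℓ)) satisfies: (i) its image is exactly the open set O_ℓ = {(v,w) ∈ ℂ² : 0 < |w| < exp(−π|v|²/ℓ)}; (ii) Φ_ℓ(t,v,s) = Φ_ℓ(t',v',s') if and only if t = t', v = v', and s − s' ∈ ℓ·ℤ. Consequently Φ_ℓ descends to a homeomorphism from ℝ × ℂ × (ℝ/ℓℤ) (with the quotient topology) onto the open subset O_ℓ of ℂ². -/

import Mathlib

/-- The cusp coordinate map `Φ_ℓ(t,v,s) = (v, exp(π(-e^{2t} - |v|² + 2is)/ℓ))`. -/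
noncomputable def cuspΦ (ℓ t : ℝ) (v : ℂ) (s : ℝ) : ℂ × ℂ :=
  (v, Complex.exp ((Real.pi : ℂ) *
        (-(Real.exp (2 * t) : ℂ) - (((‖v‖ : ℝ) : ℂ))^2 + 2 * Complex.I * (s : ℂ))
      / (ℓ : ℂ)))

/-- The open set `O_ℓ = {(v,w) : 0 < |w| < exp(-π|v|²/ℓ)} ⊂ ℂ²`. -/
def cuspO (ℓ : ℝ) : Set (ℂ × ℂ) :=
  {p : ℂ × ℂ | 0 < ‖p.2‖ ∧
      ‖p.2‖ < Real.exp (-Real.pi * (‖p.1‖)^2 / ℓ)}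

/-
The second coordinate of `Φ_ℓ(t, v, s)` is `r · e^{2πis/ℓ}` with `r = exp(-π(e^{2t} + |v|²)/ℓ)`.
For fixed `v`, `t ↦ r` maps `ℝ` onto `(0, exp(-π|v|²/ℓ))` with explicit inverse
`t = ½ log(-ℓ log r / π - |v|²)`, and both depend continuously on `v`.
The phase `s ↦ e^{2πis/ℓ}` is the standard homeomorphism `ℝ/ℓℤ ≃ S¹`.
Polar coordinates `w = |w| · (w/|w|)` reassemble these into a homeomorphism
`ℝ × ℂ × ℝ/ℓℤ ≃ O_ℓ`; parts (i) and (ii) are its surjectivity and injectivity.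
-/

open Complex Real

section Radius

variable {ℓ t r : ℝ} {v : ℂ}

noncomputable def cuspRadius (ℓ t : ℝ) (v : ℂ) : ℝ :=
  Real.exp (-π * (Real.exp (2 * t) + ‖v‖ ^ 2) / ℓ)

noncomputable def cuspHeight (ℓ : ℝ) (v : ℂ) (r : ℝ) : ℝ :=
  Real.log (-ℓ / π * Real.log r - ‖v‖ ^ 2) / 2

lemma cuspRadius_pos : 0 < cuspRadius ℓ t v := Real.exp_pos _

lemma cuspRadius_lt (hℓ : 0 < ℓ) : cuspRadius ℓ t v < Real.exp (-π * ‖v‖ ^ 2 / ℓ) := by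
  refine Real.exp_lt_exp.mpr (div_lt_div_of_pos_right ?_ hℓ)
  nlinarith [Real.exp_pos (2 * t), Real.pi_pos]

lemma cuspHeight_cuspRadius (hℓ : ℓ ≠ 0) : cuspHeight ℓ v (cuspRadius ℓ t v) = t := by
  have : -ℓ / π * (-π * (Real.exp (2 * t) + ‖v‖ ^ 2) / ℓ) - ‖v‖ ^ 2 = Real.exp (2 * t) := by
    field_simp; ring
  rw [cuspHeight, cuspRadius, Real.log_exp, this, Real.log_exp]
  ring

lemma cuspHeight_logArg_pos (hℓ : 0 < ℓ) (hr : 0 < r) (hrv : r < Real.exp (-π * ‖v‖ ^ 2 / ℓ)) :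
    0 < -ℓ / π * Real.log r - ‖v‖ ^ 2 := by
  have hlog : Real.log r < -π * ‖v‖ ^ 2 / ℓ := (Real.log_lt_iff_lt_exp hr).mpr hrv
  rw [lt_div_iff₀ hℓ] at hlog
  have : 0 < -(Real.log r * ℓ) / π - ‖v‖ ^ 2 := by
    rw [sub_pos, lt_div_iff₀ Real.pi_pos]; linarith
  convert this using 2; ring

lemma cuspRadius_cuspHeight (hℓ : 0 < ℓ) (hr : 0 < r)
    (hrv : r < Real.exp (-π * ‖v‖ ^ 2 / ℓ)) : cuspRadius ℓ (cuspHeight ℓ v r) v = r := by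
  rw [cuspRadius, cuspHeight, mul_div_cancel₀ _ two_ne_zero,
    Real.exp_log (cuspHeight_logArg_pos hℓ hr hrv)]
  convert Real.exp_log hr using 2
  field_simp
  ring

end Radius

lemma norm_ofReal_mul_circle {r : ℝ} (hr : 0 ≤ r) (c : Circle) : ‖(r : ℂ) * c‖ = r := by
  rw [norm_mul, Circle.norm_coe, mul_one, Complex.norm_of_nonneg hr]

noncomputable def Circle.ofNeZero (w : ℂ) (hw : w ≠ 0) : Circle :=
  ⟨w / ‖w‖, mem_sphere_zero_iff_norm.2 <| by
    rw [norm_div, Complex.norm_real, norm_norm, div_self (norm_ne_zero_iff.mpr hw)]⟩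

lemma Circle.coe_ofNeZero {w : ℂ} (hw : w ≠ 0) : (Circle.ofNeZero w hw : ℂ) = w / ‖w‖ := rfl

lemma ne_zero_of_mem_cuspO {ℓ : ℝ} {q : ℂ × ℂ} (hq : q ∈ cuspO ℓ) : q.2 ≠ 0 :=
  norm_pos_iff.mp hq.1

noncomputable def cuspPolarChart {ℓ : ℝ} (hℓ : 0 < ℓ) : (ℝ × ℂ × Circle) ≃ₜ cuspO ℓ where
  toFun p := ⟨(p.2.1, cuspRadius ℓ p.1 p.2.1 * p.2.2), by
    rw [cuspO, Set.mem_ofPred_eq, norm_ofReal_mul_circle cuspRadius_pos.le]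
    exact ⟨cuspRadius_pos, cuspRadius_lt hℓ⟩⟩
  invFun q := (cuspHeight ℓ q.1.1 ‖q.1.2‖, q.1.1, Circle.ofNeZero q.1.2 (ne_zero_of_mem_cuspO q.2))
  left_inv := by
    rintro ⟨t, v, c⟩
    have hnorm : ‖(cuspRadius ℓ t v : ℂ) * c‖ = cuspRadius ℓ t v :=
      norm_ofReal_mul_circle cuspRadius_pos.le c
    ext
    · exact (congrArg (cuspHeight ℓ v) hnorm).trans (cuspHeight_cuspRadius hℓ.ne')
    · rfl
    · change _ / _ = _
      rw [hnorm, mul_div_cancel_left₀ _ (ofReal_ne_zero.mpr cuspRadius_pos.ne')]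
  right_inv := by
    rintro ⟨⟨v, w⟩, hq⟩
    have hw : w ≠ 0 := ne_zero_of_mem_cuspO hq
    ext
    · rfl
    · simp only [cuspRadius_cuspHeight hℓ hq.1 hq.2, Circle.coe_ofNeZero]
      exact mul_div_cancel₀ w (by simpa using hw)
  continuous_toFun := by
    unfold cuspRadius
    fun_prop
  continuous_invFun := by
    have hw (q : cuspO ℓ) : q.1.2 ≠ 0 := ne_zero_of_mem_cuspO q.2
    have hpos (q : cuspO ℓ) := cuspHeight_logArg_pos hℓ q.2.1 q.2.2
    unfold cuspHeight Circle.ofNeZero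
    refine .prodMk ?_ (.prodMk (by fun_prop) (.subtype_mk ?_ _))
    · fun_prop (disch := first
        | exact fun q => (hpos q).ne' | exact fun q => norm_ne_zero_iff.mpr (hw q))
    · fun_prop (disch := exact fun q => ofReal_ne_zero.mpr (norm_ne_zero_iff.mpr (hw q)))

lemma AddCircle.coe_eq_coe_iff_exists_int {𝕜 : Type*} [CommRing 𝕜] {p x y : 𝕜} :
    (x : AddCircle p) = y ↔ ∃ k : ℤ, x - y = p * k := by
  simp_rw [← sub_eq_zero (a := (x : AddCircle p)), ← AddCircle.coe_sub,
    AddCircle.coe_eq_zero_iff, zsmul_eq_mul, mul_comm _ p, eq_comm]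

lemma cuspΦ_eq (ℓ t : ℝ) (v : ℂ) (s : ℝ) :
    cuspΦ ℓ t v s = (v, (cuspRadius ℓ t v : ℂ) * AddCircle.toCircle (s : AddCircle ℓ)) := by
  rw [cuspΦ, cuspRadius, AddCircle.toCircle_apply_mk, Circle.coe_exp]
  simp only [ofReal_exp, ← Complex.exp_add]
  congr 2
  push_cast
  field_simp
  ring

noncomputable def cuspChart {ℓ : ℝ} (hℓ : 0 < ℓ) : (ℝ × ℂ × AddCircle ℓ) ≃ₜ cuspO ℓ :=
  ((Homeomorph.refl ℝ).prodCongr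
    ((Homeomorph.refl ℂ).prodCongr (AddCircle.homeomorphCircle hℓ.ne'))).trans
    (cuspPolarChart hℓ)

lemma coe_cuspChart_mk {ℓ : ℝ} (hℓ : 0 < ℓ) (t : ℝ) (v : ℂ) (s : ℝ) :
    (cuspChart hℓ (t, v, s) : ℂ × ℂ) = cuspΦ ℓ t v s := by
  rw [cuspΦ_eq, ← AddCircle.homeomorphCircle_apply hℓ.ne']
  rfl

theorem cusp_chart (ℓ : ℝ) (hℓ : 0 < ℓ) :
    -- (i) the image of `Φ_ℓ` is exactly `O_ℓ`
    Set.range (fun p : ℝ × ℂ × ℝ => cuspΦ ℓ p.1 p.2.1 p.2.2) = cuspO ℓ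
    -- (ii) `Φ_ℓ(t,v,s) = Φ_ℓ(t',v',s')` iff `t = t'`, `v = v'` and `s - s' ∈ ℓℤ`
    ∧ (∀ (t t' : ℝ) (v v' : ℂ) (s s' : ℝ),
        cuspΦ ℓ t v s = cuspΦ ℓ t' v' s' ↔
          t = t' ∧ v = v' ∧ ∃ k : ℤ, s - s' = ℓ * k)
    -- hence `Φ_ℓ` descends to a homeomorphism `ℝ × ℂ × (ℝ/ℓℤ) ≃ O_ℓ`
    ∧ ∃ h : (ℝ × ℂ × AddCircle ℓ) ≃ₜ cuspO ℓ,
        ∀ (t : ℝ) (v : ℂ) (s : ℝ),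
          (h (t, v, (s : AddCircle ℓ)) : ℂ × ℂ) = cuspΦ ℓ t v s := by
  have hΦ := coe_cuspChart_mk hℓ
  refine ⟨?_, fun t t' v v' s s' => ?_, cuspChart hℓ, hΦ⟩
  · ext q
    refine ⟨?_, fun hq => ?_⟩
    · rintro ⟨⟨t, v, s⟩, rfl⟩
      simpa only [hΦ] using (cuspChart hℓ (t, v, s)).2
    · obtain ⟨⟨t, v, s⟩, hp⟩ := (cuspChart hℓ).surjective ⟨q, hq⟩
      obtain ⟨s, rfl⟩ := QuotientAddGroup.mk_surjective s
      exact ⟨(t, v, s), (hΦ t v s).symm.trans (congrArg Subtype.val hp)⟩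
  · rw [← hΦ, ← hΦ, Subtype.coe_inj, (cuspChart hℓ).injective.eq_iff, Prod.mk.injEq,
      Prod.mk.injEq, AddCircle.coe_eq_coe_iff_exists_int]
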